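/- Let d ≥ 1, λ ∈ (0,1), and let (Z_n) be the drifted random walk on ℤ^d starting at 0 that moves by +e_i with probability 1/(d(1+λ)) and by −e_i with probability λ/(d(1+λ)) for each coordinate i. Then for every k = (k_1,…,k_d) ∈ ℤ^d and every choice of signs ε ∈ {−1,1}^d, P(Z_n = k) = λ^{∑_{i=1}^d (ε_i − 1)k_i/2} · P(Z_n = (ε_1 k_1,…, ε_d k_d)). -/

import Mathlib

/-- The step `±e_i` of the drifted random walk on `ℤ^d`. -/
def stepVec (d : ℕ) (i : Fin d) (b : Bool) : Fin d → ℤ :=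
  fun j => if j = i then (if b then 1 else -1) else 0

/-- Probability of a step: `+e_i` with probability `1/(d(1+λ))`,
`-e_i` with probability `λ/(d(1+λ))`. -/
noncomputable def stepProb (d : ℕ) (lam : ℝ) (b : Bool) : ℝ :=
  if b then 1 / (d * (1 + lam)) else lam / (d * (1 + lam))

open scoped Classical in
/-- `P(Z_n = k | Z_0 = 0)` for the drifted random walk, written as a sum
over step sequences. -/
noncomputable def ZProb (d : ℕ) (lam : ℝ) (n : ℕ) (k : Fin d → ℤ) : ℝ :=
  ∑ ω : Fin n → Fin d × Bool,
    (∏ j, stepProb d lam (ω j).2) *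
      (if (∑ j, stepVec d (ω j).1 (ω j).2) = k then 1 else 0)

/-!
Reversing the direction of every step taken along a coordinate with `ε i = -1` is a bijection on
step sequences that sends the endpoint `k` to `ε * k`. Each reversed step changes the weight of a
path by `lam ^ (∓1)`, and these factors multiply to `lam ^ (c ⬝ᵥ k)` with `c = (ε - 1) / 2`, a
character of the endpoint alone; so it pulls out of the sum over paths ending at `k`.
-/

open Finset Matrix

section Reweighting

variable {S M K : Type*} [Fintype S] [AddCommMonoid M] [DecidableEq M] [CommSemiring K]

def walkProb (p : S → K) (v : S → M) (n : ℕ) (k : M) : K :=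
  ∑ ω : Fin n → S, (∏ j, p (ω j)) * if ∑ j, v (ω j) = k then 1 else 0

theorem walkProb_eq_mul_walkProb_map (p : S → K) (v : S → M) (F : S ≃ S) (L : M →+ M)
    (hL : Function.Injective L) (χ : Multiplicative M →* K) (hv : ∀ s, v (F s) = L (v s))
    (hp : ∀ s, p s = χ (.ofAdd (v s)) * p (F s)) (n : ℕ) (k : M) :
    walkProb p v n k = χ (.ofAdd k) * walkProb p v n (L k) := by
  rw [walkProb, walkProb, mul_sum]
  refine Fintype.sum_equiv (.piCongrRight fun _ => F) _ _ fun ω => ?_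
  simp only [Equiv.piCongrRight_apply, Pi.map_apply, hv, ← map_sum, hL.eq_iff]
  split_ifs with hk
  · rw [prod_congr rfl fun j _ => hp (ω j), prod_mul_distrib, ← map_prod, ← ofAdd_sum, hk,
      mul_assoc]
  · simp

end Reweighting

theorem ZProb_eq_walkProb (d : ℕ) (lam : ℝ) (n : ℕ) (k : Fin d → ℤ) :
    ZProb d lam n k =
      walkProb (fun x : Fin d × Bool => stepProb d lam x.2) (fun x => stepVec d x.1 x.2) n k :=
  rfl

def flipStep {d : ℕ} (ε : Fin d → ℤ) (x : Fin d × Bool) : Fin d × Bool :=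
  (x.1, if ε x.1 = 1 then x.2 else !x.2)

theorem flipStep_involutive {d : ℕ} (ε : Fin d → ℤ) : Function.Involutive (flipStep ε) := by
  rintro ⟨i, b⟩
  by_cases h : ε i = 1 <;> simp [flipStep, h]

theorem stepVec_flipStep {d : ℕ} {ε : Fin d → ℤ} (hε : ∀ i, ε i = 1 ∨ ε i = -1)
    (x : Fin d × Bool) :
    stepVec d (flipStep ε x).1 (flipStep ε x).2 = ε * stepVec d x.1 x.2 := by
  obtain ⟨i, b⟩ := x
  funext j
  by_cases hj : j = i
  · subst hj
    rcases hε j with h | h <;> cases b <;> simp [flipStep, stepVec, h]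
  · simp [flipStep, stepVec, hj]

theorem stepProb_eq_zpow_mul_flipStep {d : ℕ} {lam : ℝ} (hlam : lam ≠ 0) {ε : Fin d → ℤ}
    (hε : ∀ i, ε i = 1 ∨ ε i = -1) (x : Fin d × Bool) :
    stepProb d lam x.2 =
      lam ^ ((fun i => (ε i - 1) / 2) ⬝ᵥ stepVec d x.1 x.2) *
        stepProb d lam (flipStep ε x).2 := by
  obtain ⟨i, b⟩ := x
  have hdot : (fun i => (ε i - 1) / 2) ⬝ᵥ stepVec d i b =
      (ε i - 1) / 2 * (if b then 1 else -1) := by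
    simp [dotProduct, stepVec]
  rw [hdot]
  rcases hε i with h | h <;> cases b <;> simp [flipStep, stepProb, h, div_eq_mul_inv, hlam]

theorem stmt12 (d : ℕ) (lam : ℝ) (h0 : 0 < lam)
    (n : ℕ) (k : Fin d → ℤ) (ε : Fin d → ℤ) (hε : ∀ i, ε i = 1 ∨ ε i = -1) :
    ZProb d lam n k
      = lam ^ ((∑ i, (ε i - 1) * k i) / 2) * ZProb d lam n (fun i => ε i * k i) := by
  set c : Fin d → ℤ := fun i => (ε i - 1) / 2
  have hexp : (∑ i, (ε i - 1) * k i) / 2 = c ⬝ᵥ k := by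
    have h2c : ∀ i, ε i - 1 = 2 * c i := fun i => by rcases hε i with h | h <;> simp [c, h]
    simp only [h2c, mul_assoc, ← mul_sum]
    exact Int.mul_ediv_cancel_left _ two_ne_zero
  have hinj : Function.Injective (AddMonoidHom.mulLeft ε) := by
    have hεε : ε * ε = 1 := funext fun i => by rcases hε i with h | h <;> simp [h]
    exact Function.LeftInverse.injective (g := AddMonoidHom.mulLeft ε)
      fun x => by simp [← mul_assoc, hεε]
  let χ : Multiplicative (Fin d → ℤ) →* ℝ :=
    { toFun := fun x => lam ^ (c ⬝ᵥ x.toAdd)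
      map_one' := by simp
      map_mul' := fun x y => by simp [dotProduct_add, zpow_add₀ h0.ne'] }
  rw [hexp, ZProb_eq_walkProb, ZProb_eq_walkProb]
  exact walkProb_eq_mul_walkProb_map _ _ (flipStep_involutive ε).toPerm _ hinj χ
    (stepVec_flipStep hε) (stepProb_eq_zpow_mul_flipStep h0.ne' hε) n k
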